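/- Let X be a k-ary unbiased operator on {0,1}^n. Suppose y, x^(1), ..., x^(k) and ỹ, x̃^(1), ..., x̃^(k) are such that the index sets S_j (from the x's) and S̃_j (from the x̃'s) satisfy |S_j| = |S̃_j| for all j, and |{i : y_i ≠ x^(1)_i} ∩ S_j| = |{i : ỹ_i ≠ x̃^(1)_i} ∩ S̃_j| for all j. Then P_X(y | x^(1), ..., x^(k)) = P_X(ỹ | x̃^(1), ..., x̃^(k)). -/
import Mathlib


/-- Group index of a bit position `i` w.r.t. arguments `x 0, …, x (k-1)`:
`j = Σ_{t=1}^{k-1} 2^(t-1) · [x 0 i ≠ x t i]` (0-indexed version of the paper's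
`Σ_{t=2}^{k} 2^(t-2) · [x⁽¹⁾_i ≠ x⁽ᵗ⁾_i]`). -/
def grpIdx {n k : ℕ} [NeZero k] (x : Fin k → Fin n → Bool) (i : Fin n) : ℕ :=
  ∑ t : Fin k, if t ≠ 0 ∧ x 0 i ≠ x t i then 2 ^ ((t : ℕ) - 1) else 0

/-- The index set `S_j`. -/
def grpSet {n k : ℕ} [NeZero k] (x : Fin k → Fin n → Bool) (j : ℕ) : Finset (Fin n) :=
  Finset.univ.filter (fun i => grpIdx x i = j)

/-- Applying a coordinate permutation `π` to a bit string. -/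
def permStr {n : ℕ} (π : Equiv.Perm (Fin n)) (s : Fin n → Bool) : Fin n → Bool :=
  fun j => s (π.symm j)


lemma vec_eq {k : ℕ} [NeZero k] (v w : Fin k → Bool) (hv : v 0 = false) (hw : w 0 = false)
    (h : (∑ t : Fin k, if t ≠ 0 ∧ v 0 ≠ v t then 2 ^ ((t : ℕ) - 1) else 0)
       = ∑ t : Fin k, if t ≠ 0 ∧ w 0 ≠ w t then 2 ^ ((t : ℕ) - 1) else 0) : v = w := by
  classical
  set Dv := Finset.univ.filter (fun t : Fin k => t ≠ 0 ∧ v 0 ≠ v t) with hDv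
  set Dw := Finset.univ.filter (fun t : Fin k => t ≠ 0 ∧ w 0 ≠ w t) with hDw
  have hne : ∀ t : Fin k, t ≠ 0 → (t : ℕ) ≠ 0 := by
    intro t ht hc
    exact ht (Fin.ext (by simp [hc]))
  have hinjv : Set.InjOn (fun t : Fin k => (t : ℕ) - 1) Dv := by
    intro a ha b hb hab
    have ha' : a ≠ 0 ∧ v 0 ≠ v a := by simpa [hDv] using ha
    have hb' : b ≠ 0 ∧ v 0 ≠ v b := by simpa [hDv] using hb
    have h1 := hne a ha'.1
    have h2 := hne b hb'.1
    simp only at hab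
    exact Fin.ext (by omega)
  have hinjw : Set.InjOn (fun t : Fin k => (t : ℕ) - 1) Dw := by
    intro a ha b hb hab
    have ha' : a ≠ 0 ∧ w 0 ≠ w a := by simpa [hDw] using ha
    have hb' : b ≠ 0 ∧ w 0 ≠ w b := by simpa [hDw] using hb
    have h1 := hne a ha'.1
    have h2 := hne b hb'.1
    simp only at hab
    exact Fin.ext (by omega)
  have hsum : ∑ a ∈ Dv.image (fun t : Fin k => (t : ℕ) - 1), 2 ^ a
      = ∑ a ∈ Dw.image (fun t : Fin k => (t : ℕ) - 1), 2 ^ a := by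
    rw [Finset.sum_image (fun a ha b hb => hinjv ha hb),
        Finset.sum_image (fun a ha b hb => hinjw ha hb)]
    rw [hDv, hDw, Finset.sum_filter, Finset.sum_filter]
    exact h
  have himg := Finset.geomSum_injective le_rfl hsum
  have hD : Dv = Dw := by
    ext t
    constructor
    · intro ht
      have : (t : ℕ) - 1 ∈ Dw.image (fun t : Fin k => (t : ℕ) - 1) := by
        rw [← himg]; exact Finset.mem_image_of_mem _ ht
      obtain ⟨s, hs, hst⟩ := Finset.mem_image.1 this
      have ht' : t ≠ 0 ∧ v 0 ≠ v t := by simpa [hDv] using ht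
      have hs' : s ≠ 0 ∧ w 0 ≠ w s := by simpa [hDw] using hs
      have h1 := hne t ht'.1; have h2 := hne s hs'.1
      have : s = t := Fin.ext (by omega)
      rwa [this] at hs
    · intro ht
      have : (t : ℕ) - 1 ∈ Dv.image (fun t : Fin k => (t : ℕ) - 1) := by
        rw [himg]; exact Finset.mem_image_of_mem _ ht
      obtain ⟨s, hs, hst⟩ := Finset.mem_image.1 this
      have ht' : t ≠ 0 ∧ w 0 ≠ w t := by simpa [hDw] using ht
      have hs' : s ≠ 0 ∧ v 0 ≠ v s := by simpa [hDv] using hs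
      have h1 := hne t ht'.1; have h2 := hne s hs'.1
      have : s = t := Fin.ext (by omega)
      rwa [this] at hs
  funext t
  by_cases ht : t = 0
  · rw [ht, hv, hw]
  · have hmem : (t ∈ Dv) ↔ (t ∈ Dw) := by rw [hD]
    simp only [hDv, hDw, Finset.mem_filter, Finset.mem_univ, true_and] at hmem
    rw [hv, hw] at hmem
    cases hvt : v t <;> cases hwt : w t <;> simp_all

lemma exists_perm_of_card {n : ℕ} {α : Type} [DecidableEq α] (f f' : Fin n → α)
    (h : ∀ a, (Finset.univ.filter fun i => f i = a).card
        = (Finset.univ.filter fun i => f' i = a).card) :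
    ∃ π : Equiv.Perm (Fin n), ∀ i, f i = f' (π i) := by
  classical
  have e : ∀ a, {i // f i = a} ≃ {i // f' i = a} := fun a =>
    Fintype.equivOfCardEq (by simpa [Fintype.card_subtype] using h a)
  refine ⟨((Equiv.sigmaFiberEquiv f).symm.trans
      ((Equiv.sigmaCongrRight e).trans (Equiv.sigmaFiberEquiv f'))), fun i => ?_⟩
  exact ((e (f i)) ⟨i, rfl⟩).2.symm

lemma grpIdx_xor {n k : ℕ} [NeZero k] (x : Fin k → Fin n → Bool) (i : Fin n) :
    grpIdx (fun t i => xor (x t i) (x 0 i)) i = grpIdx x i := by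
  unfold grpIdx
  apply Finset.sum_congr rfl
  intro t _
  have : (xor (x 0 i) (x 0 i) ≠ xor (x t i) (x 0 i)) ↔ (x 0 i ≠ x t i) := by
    cases x 0 i <;> cases x t i <;> simp
  simp only [this]

/-- Lemma 2: for a `k`-ary unbiased operator `P`, the probability
`P(y | x⁽¹⁾,…,x⁽ᵏ⁾)` depends only on the sizes `|S_j|` of the index groups and
on the numbers of positions of each group where `y` differs from `x⁽¹⁾`. -/
theorem stmt_6 (n k : ℕ) [NeZero k]
    (P : (Fin k → Fin n → Bool) → (Fin n → Bool) → ℝ)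
    (hxor : ∀ (x : Fin k → Fin n → Bool) (y z : Fin n → Bool),
        P x y = P (fun t i => xor (x t i) (z i)) (fun i => xor (y i) (z i)))
    (hperm : ∀ (x : Fin k → Fin n → Bool) (y : Fin n → Bool) (π : Equiv.Perm (Fin n)),
        P x y = P (fun t => permStr π (x t)) (permStr π y))
    (x x' : Fin k → Fin n → Bool) (y y' : Fin n → Bool)
    (hsizes : ∀ j : ℕ, (grpSet x j).card = (grpSet x' j).card)
    (hdiffs : ∀ j : ℕ,
        ((grpSet x j).filter (fun i => y i ≠ x 0 i)).card
          = ((grpSet x' j).filter (fun i => y' i ≠ x' 0 i)).card) :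
    P x y = P x' y' := by
  classical
  set X : Fin k → Fin n → Bool := fun t i => xor (x t i) (x 0 i) with hX
  set Y : Fin n → Bool := fun i => xor (y i) (x 0 i) with hY
  set X' : Fin k → Fin n → Bool := fun t i => xor (x' t i) (x' 0 i) with hX'
  set Y' : Fin n → Bool := fun i => xor (y' i) (x' 0 i) with hY'
  have h1 : P x y = P X Y := hxor x y (x 0)
  have h2 : P x' y' = P X' Y' := hxor x' y' (x' 0)
  -- fibers
  have hcard : ∀ a : ℕ × Bool,
      (Finset.univ.filter fun i => (grpIdx x i, Y i) = a).card
        = (Finset.univ.filter fun i => (grpIdx x' i, Y' i) = a).card := by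
    rintro ⟨j, b⟩
    have hYtrue : ∀ i, Y i = true ↔ y i ≠ x 0 i := by
      intro i; cases hy : y i <;> cases h0 : x 0 i <;> simp [hY, hy, h0]
    have hY'true : ∀ i, Y' i = true ↔ y' i ≠ x' 0 i := by
      intro i; cases hy : y' i <;> cases h0 : x' 0 i <;> simp [hY', hy, h0]
    have htrue : (Finset.univ.filter fun i => grpIdx x i = j ∧ Y i = true).card
        = (Finset.univ.filter fun i => grpIdx x' i = j ∧ Y' i = true).card := by
      have e1 : (Finset.univ.filter fun i : Fin n => grpIdx x i = j ∧ Y i = true)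
          = (grpSet x j).filter (fun i => y i ≠ x 0 i) := by
        rw [grpSet, Finset.filter_filter]
        apply Finset.filter_congr
        intro i _
        rw [hYtrue i]
      have e2 : (Finset.univ.filter fun i : Fin n => grpIdx x' i = j ∧ Y' i = true)
          = (grpSet x' j).filter (fun i => y' i ≠ x' 0 i) := by
        rw [grpSet, Finset.filter_filter]
        apply Finset.filter_congr
        intro i _
        rw [hY'true i]
      rw [e1, e2]
      exact hdiffs j
    cases b
    · -- false case: complement inside grpSet
      have s1 : (Finset.univ.filter fun i : Fin n => grpIdx x i = j ∧ Y i = true).card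
          + (Finset.univ.filter fun i : Fin n => grpIdx x i = j ∧ Y i = false).card
          = (grpSet x j).card := by
        rw [grpSet]
        rw [show (Finset.univ.filter fun i : Fin n => grpIdx x i = j ∧ Y i = true)
            = (Finset.univ.filter fun i : Fin n => grpIdx x i = j).filter (fun i => Y i = true) by
          rw [Finset.filter_filter]]
        rw [show (Finset.univ.filter fun i : Fin n => grpIdx x i = j ∧ Y i = false)
            = (Finset.univ.filter fun i : Fin n => grpIdx x i = j).filter (fun i => ¬ (Y i = true)) by
          rw [Finset.filter_filter]
          apply Finset.filter_congr
          intro i _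
          simp]
        exact Finset.card_filter_add_card_filter_not _
      have s2 : (Finset.univ.filter fun i : Fin n => grpIdx x' i = j ∧ Y' i = true).card
          + (Finset.univ.filter fun i : Fin n => grpIdx x' i = j ∧ Y' i = false).card
          = (grpSet x' j).card := by
        rw [grpSet]
        rw [show (Finset.univ.filter fun i : Fin n => grpIdx x' i = j ∧ Y' i = true)
            = (Finset.univ.filter fun i : Fin n => grpIdx x' i = j).filter (fun i => Y' i = true) by
          rw [Finset.filter_filter]]
        rw [show (Finset.univ.filter fun i : Fin n => grpIdx x' i = j ∧ Y' i = false)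
            = (Finset.univ.filter fun i : Fin n => grpIdx x' i = j).filter (fun i => ¬ (Y' i = true)) by
          rw [Finset.filter_filter]
          apply Finset.filter_congr
          intro i _
          simp]
        exact Finset.card_filter_add_card_filter_not _
      have hs := hsizes j
      simp only [Prod.mk.injEq]
      omega
    · simpa only [Prod.mk.injEq] using htrue
  obtain ⟨π, hπ⟩ := exists_perm_of_card (fun i => (grpIdx x i, Y i))
    (fun i => (grpIdx x' i, Y' i)) hcard
  have hπ1 : ∀ i, grpIdx x i = grpIdx x' (π i) := fun i => congrArg Prod.fst (hπ i)
  have hπ2 : ∀ i, Y i = Y' (π i) := fun i => congrArg Prod.snd (hπ i)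
  have hXperm : X' = fun t => permStr π (X t) := by
    funext t j
    show X' t j = X t (π.symm j)
    set i := π.symm j with hi
    have hπi : π i = j := Equiv.apply_symm_apply π j
    have hg : grpIdx X i = grpIdx X' j := by
      rw [hX, hX', grpIdx_xor, grpIdx_xor, ← hπi]
      exact hπ1 i
    have hv0 : (fun t => X t i) 0 = false := by simp [hX]
    have hw0 : (fun t => X' t j) 0 = false := by simp [hX']
    have := vec_eq (fun t => X t i) (fun t => X' t j) hv0 hw0 (by
      have g1 : grpIdx X i = ∑ t : Fin k,
          if t ≠ 0 ∧ X 0 i ≠ X t i then 2 ^ ((t : ℕ) - 1) else 0 := rfl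
      have g2 : grpIdx X' j = ∑ t : Fin k,
          if t ≠ 0 ∧ X' 0 j ≠ X' t j then 2 ^ ((t : ℕ) - 1) else 0 := rfl
      rw [g1, g2] at hg
      exact hg)
    exact (congrFun this t).symm
  have hYperm : Y' = permStr π Y := by
    funext j
    show Y' j = Y (π.symm j)
    have := hπ2 (π.symm j)
    rw [Equiv.apply_symm_apply] at this
    exact this.symm
  rw [h1, h2, hXperm, hYperm]
  exact hperm X Y π
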